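/- Let N ~ Geom(γ) with P(N=k) = γ^k(1-γ) for k ≥ 0 and 0 < γ < 1, and let (D_k)_{k≥0} be a real sequence with Σ_k γ^k |D_k| < ∞. Then E[D_N - D_{N+1}] = (1/γ - 1)(D_0 - E[D_N]). -/
import Mathlib


theorem stmt_6 (γ : ℝ) (h0 : 0 < γ) (h1 : γ < 1) (D : ℕ → ℝ)
    (hsum : Summable (fun k : ℕ => γ ^ k * |D k|)) :
    ∑' k : ℕ, γ ^ k * (1 - γ) * (D k - D (k + 1))
      = (1 / γ - 1) * (D 0 - ∑' k : ℕ, γ ^ k * (1 - γ) * D k) := by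
  have hγ : γ ≠ 0 := ne_of_gt h0
  have hf : Summable (fun k : ℕ => γ ^ k * (1 - γ) * D k) := by
    apply Summable.of_abs
    apply (hsum.mul_right (1 - γ)).congr
    intro k
    have hp : 0 ≤ γ ^ k := pow_nonneg h0.le k
    have h1γ : 0 ≤ 1 - γ := by linarith
    rw [abs_mul, abs_mul, abs_of_nonneg hp, abs_of_nonneg h1γ]
    ring
  have hg : Summable (fun k : ℕ => γ ^ k * (1 - γ) * D (k + 1)) := by
    have := (hf.comp_injective (add_right_injective 1)).mul_left (1 / γ)
    apply this.congr
    intro k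
    simp only [Function.comp]
    field_simp
    ring
  have hshift : ∑' k : ℕ, γ ^ (k + 1) * (1 - γ) * D (k + 1)
      = (∑' k : ℕ, γ ^ k * (1 - γ) * D k) - γ ^ 0 * (1 - γ) * D 0 := by
    rw [Summable.tsum_eq_zero_add hf]; ring
  have hg' : ∑' k : ℕ, γ ^ k * (1 - γ) * D (k + 1)
      = (1 / γ) * ((∑' k : ℕ, γ ^ k * (1 - γ) * D k) - γ ^ 0 * (1 - γ) * D 0) := by
    rw [← hshift, ← tsum_mul_left]
    congr 1; funext k; field_simp; ring
  have key : ∑' k : ℕ, γ ^ k * (1 - γ) * (D k - D (k + 1))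
      = (∑' k : ℕ, γ ^ k * (1 - γ) * D k) - ∑' k : ℕ, γ ^ k * (1 - γ) * D (k + 1) := by
    rw [← Summable.tsum_sub hf hg]
    congr 1; funext k; ring
  rw [key, hg']
  field_simp
  ring
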